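/- arXiv:2507.20003 — 5 statements merged into one kernel-verified Lean document; each statement's English description precedes it below -/
import Mathlib

section
/- The hyper-Catalan number C[m_2, m_3, ..., m_q] = (2m_2 + 3m_3 + ... + q·m_q)! / ((1 + m_2 + 2m_3 + ... + (q−1)m_q)! · m_2! · m_3! ··· m_q!) is a natural number (i.e., the denominator divides the numerator). -/
/-- The hyper-Catalan number `(Σ k·m_k)! / ((1 + Σ (k−1)·m_k)! · Π m_k!)` is a
natural number: the denominator divides the numerator. -/
theorem stmt_2 (q : ℕ) (m : ℕ → ℕ) :
    (Nat.factorial (1 + ∑ k ∈ Finset.Icc 2 q, (k - 1) * m k) *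
        ∏ k ∈ Finset.Icc 2 q, Nat.factorial (m k)) ∣
      Nat.factorial (∑ k ∈ Finset.Icc 2 q, k * m k) := by
  set s := Finset.Icc 2 q with hs
  set a := ∑ k ∈ s, (k - 1) * m k with ha
  set b := ∑ k ∈ s, m k with hb
  have hn : (∑ k ∈ s, k * m k) = a + b := by
    rw [ha, hb, ← Finset.sum_add_distrib]
    refine Finset.sum_congr rfl fun k hk => ?_
    have h2 : 2 ≤ k := (Finset.mem_Icc.mp hk).1
    have h3 : (k - 1) * m k + m k = (k - 1 + 1) * m k := by ring
    rw [h3, Nat.sub_add_cancel (by omega)]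
  rw [hn]
  set n := a + b with hnn
  set D := Nat.factorial (1 + a) * ∏ k ∈ s, Nat.factorial (m k) with hD
  -- D divides (a+1) * n!
  have h1 : D ∣ (a + 1) * Nat.factorial n := by
    have hab : Nat.factorial a * Nat.factorial b ∣ Nat.factorial n :=
      Nat.factorial_mul_factorial_dvd_factorial_add a b
    have hm : (∏ k ∈ s, Nat.factorial (m k)) ∣ Nat.factorial b :=
      Nat.prod_factorial_dvd_factorial_sum s m
    have hDeq : D = (a + 1) * (Nat.factorial a * ∏ k ∈ s, Nat.factorial (m k)) := by
      rw [hD, Nat.add_comm 1 a, Nat.factorial_succ]; ring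
    rw [hDeq]
    exact Nat.mul_dvd_mul_left _ ((Nat.mul_dvd_mul_left _ hm).trans hab)
  -- D divides m j * n! for each j in s
  have h2 : ∀ j ∈ s, D ∣ m j * Nat.factorial n := by
    intro j hj
    rcases Nat.eq_zero_or_pos (m j) with h0 | hpos
    · simp [h0]
    · have hbj : (m j - 1) + ∑ k ∈ s.erase j, m k = b - 1 := by
        have := Finset.add_sum_erase s m hj
        omega
      have hb1 : 1 ≤ b := by
        have := Finset.add_sum_erase s m hj
        omega
      have hd1 : Nat.factorial (m j - 1) * ∏ k ∈ s.erase j, Nat.factorial (m k) ∣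
          Nat.factorial (b - 1) := by
        rw [← hbj]
        exact (Nat.mul_dvd_mul_left _
          (Nat.prod_factorial_dvd_factorial_sum (s.erase j) m)).trans
          (Nat.factorial_mul_factorial_dvd_factorial_add _ _)
      have hd2 : Nat.factorial (1 + a) * Nat.factorial (b - 1) ∣ Nat.factorial n := by
        have : (1 + a) + (b - 1) = n := by omega
        rw [← this]
        exact Nat.factorial_mul_factorial_dvd_factorial_add _ _
      have hfac : Nat.factorial (m j) = m j * Nat.factorial (m j - 1) := by
        conv_lhs => rw [show m j = (m j - 1) + 1 by omega]
        rw [Nat.factorial_succ, Nat.sub_add_cancel hpos]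
      have hDeq : D = m j * (Nat.factorial (1 + a) *
          (Nat.factorial (m j - 1) * ∏ k ∈ s.erase j, Nat.factorial (m k))) := by
        rw [hD, ← Finset.mul_prod_erase s _ hj, hfac]; ring
      rw [hDeq]
      exact Nat.mul_dvd_mul_left _ ((Nat.mul_dvd_mul_left _ hd1).trans hd2)
  -- gcd(a+1, gcd of m's) = 1
  have hg : Nat.gcd (a + 1) (s.gcd m) = 1 := by
    set g := Nat.gcd (a + 1) (s.gcd m) with hgdef
    have hga : g ∣ a + 1 := Nat.gcd_dvd_left _ _
    have hgm : ∀ k ∈ s, g ∣ m k := fun k hk =>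
      (Nat.gcd_dvd_right _ _).trans (Finset.gcd_dvd hk)
    have hgsum : g ∣ a := by
      rw [ha]
      exact Finset.dvd_sum fun k hk => Dvd.dvd.mul_left (hgm k hk) _
    have h1g : g ∣ 1 := by
      have := Nat.dvd_sub hga hgsum
      simpa using this
    exact Nat.dvd_one.mp h1g
  have hgcd : D ∣ Nat.gcd ((a + 1) * Nat.factorial n) (s.gcd m * Nat.factorial n) := by
    refine Nat.dvd_gcd h1 ?_
    have : s.gcd (fun j => m j * Nat.factorial n) = s.gcd m * Nat.factorial n := by
      simp [Finset.gcd_mul_right]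
    rw [← this]
    exact Finset.dvd_gcd h2
  rwa [Nat.gcd_mul_right, hg, one_mul] at hgcd
end

section
/- The quadratic 1 − x + t₂x² = 0 has a unique solution in ℚ[[t₂]] (formal power series), and that solution is the Catalan generating series. -/
namespace PowerSeries

variable {R : Type*} [CommSemiring R]

/-- The coefficient of `X ^ (n + 1)` in `1 + X * S ^ 2` only involves coefficients of `S` of
index `≤ n`, so the equation determines `S` coefficient by coefficient. -/
theorem eq_of_eq_one_add_X_mul_sq {S T : R⟦X⟧} (hS : S = 1 + X * S ^ 2)
    (hT : T = 1 + X * T ^ 2) : S = T := by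
  ext n
  induction n using Nat.strong_induction_on with
  | _ n ih =>
    cases n with
    | zero => rw [hS, hT]; simp
    | succ n =>
      rw [hS, hT, map_add, map_add, coeff_succ_X_mul, coeff_succ_X_mul, sq, sq, coeff_mul,
        coeff_mul]
      refine congrArg _ (Finset.sum_congr rfl fun ij hij => ?_)
      rw [Finset.HasAntidiagonal.mem_antidiagonal] at hij
      rw [ih ij.1 (by omega), ih ij.2 (by omega)]

theorem mk_catalan_eq_one_add_X_mul_sq :
    (mk fun n => (catalan n : R)) = 1 + X * (mk fun n => (catalan n : R)) ^ 2 := by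
  have h := congrArg (map (Nat.castRingHom R)) catalanSeries_sq_mul_X_add_one
  have hmap : map (Nat.castRingHom R) catalanSeries = mk fun n => (catalan n : R) := by
    ext n; simp
  rw [map_add, map_mul, map_pow, map_X, map_one, hmap, add_comm, mul_comm] at h
  exact h.symm

end PowerSeries

/-- The quadratic `1 − x + t·x² = 0` has a unique solution in `ℚ[[t]]`, and that
solution is the Catalan generating series. -/
theorem stmt_6 :
    (∀ S₁ S₂ : PowerSeries ℚ,
        1 - S₁ + PowerSeries.X * S₁ ^ 2 = 0 →
        1 - S₂ + PowerSeries.X * S₂ ^ 2 = 0 → S₁ = S₂) ∧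
    (∀ S : PowerSeries ℚ, 1 - S + PowerSeries.X * S ^ 2 = 0 →
        S = PowerSeries.mk fun n => (catalan n : ℚ)) := by
  have fixed_point {S : PowerSeries ℚ} (h : 1 - S + PowerSeries.X * S ^ 2 = 0) :
      S = 1 + PowerSeries.X * S ^ 2 := by
    linear_combination -h
  refine ⟨fun S₁ S₂ h₁ h₂ => ?_, fun S h => ?_⟩
  · exact PowerSeries.eq_of_eq_one_add_X_mul_sq (fixed_point h₁) (fixed_point h₂)
  · exact PowerSeries.eq_of_eq_one_add_X_mul_sq (fixed_point h)
      PowerSeries.mk_catalan_eq_one_add_X_mul_sq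
end

section
/- For the hyper-Catalan numbers C[m_2,...,m_q] = (Σ k·m_k)! / ((1+Σ(k−1)m_k)! Π m_k!), the series S = Σ_m C[m] t^m over ℚ[[t_2,...,t_q]] satisfies the recursion on coefficients implied by S = 1 + Σ_{k=2}^q t_k S^k; in particular, C[m] = Σ over decompositions of m minus one k-gon into k types, summed over k, for m ≠ 0, and C[0] = 1. -/
/-- The index type of the variables `t_2, …, t_q`. -/
abbrev TIdx (q : ℕ) := {k : ℕ // k ∈ Finset.Icc 2 q}

/-- The hyper-Catalan number `C[m] = (Σ k·m_k)! / ((1 + Σ(k−1)m_k)! · Π m_k!)`,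
as a rational number. -/
noncomputable def hyperCatalan (q : ℕ) (m : TIdx q →₀ ℕ) : ℚ :=
  (Nat.factorial (m.sum fun k mk => (k : ℕ) * mk) : ℚ) /
    ((Nat.factorial (1 + m.sum fun k mk => ((k : ℕ) - 1) * mk) : ℚ) *
      ∏ k ∈ m.support, (Nat.factorial (m k) : ℚ))

/-- The hyper-Catalan generating series `S = Σ_m C[m] t^m` over `ℚ[[t_2,…,t_q]]`. -/
noncomputable def hyperCatalanSeries (q : ℕ) : MvPowerSeries (TIdx q) ℚ :=
  fun m => hyperCatalan q m

/-!
Put `E m = ∑ k, (d k + 1) * m k` and `F m = ∑ k, d k * m k`. For the series `S` with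
`S = 1 + ∑ j, t_j * S ^ (d j + 1)`, Lagrange inversion predicts
`[t^m] S ^ a = a * (E m + a - 1)! / ((F m + a)! * ∏ k, (m k)!)`. Rather than invoking it, we check
that these candidate series `P a` satisfy `P (b + 1) = P b + ∑ j, t_j * P (b + d j + 1)`, which is
a factorial identity coefficientwise. This recursion determines a family from its value at `0`
(by induction on `E m + a`), and both `a ↦ P (a + c)` and `a ↦ P a * P c` satisfy it, so
`P (a + c) = P a * P c`. Hence `P a = (P 1) ^ a`, and the recursion at `b = 0` is the functional
equation. The hyper-Catalan numbers are the case `d k = k - 1`.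
-/

namespace HyperCatalan

open MvPowerSeries Finsupp Nat

section Recursion

variable {σ R : Type*} [CommSemiring R]

theorem coeff_X_mul (j : σ) (f : MvPowerSeries σ R) (m : σ →₀ ℕ) :
    coeff m (X j * f) = if m j = 0 then 0 else coeff (m - single j 1) f := by
  simp only [X, coeff_monomial_mul, single_le_iff, one_mul]
  split_ifs <;> first | rfl | omega

variable [Fintype σ] (d : σ → ℕ)

/-- The recursion satisfied by the powers `U a = S ^ a` of a solution of
`S = 1 + ∑ j, X j * S ^ (d j + 1)`, namely `S ^ (b + 1) = S ^ b * S`. -/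
def IsPowFamily (U : ℕ → MvPowerSeries σ R) : Prop :=
  ∀ b, U (b + 1) = U b + ∑ j, X j * U (b + d j + 1)

variable {d}

theorem IsPowFamily.mul_right {U : ℕ → MvPowerSeries σ R} (hU : IsPowFamily d U)
    (f : MvPowerSeries σ R) : IsPowFamily d (fun a => U a * f) := by
  intro b
  simp only [hU b, add_mul, Finset.sum_mul, mul_assoc]

theorem IsPowFamily.comp_add_right {U : ℕ → MvPowerSeries σ R} (hU : IsPowFamily d U)
    (c : ℕ) : IsPowFamily d (fun a => U (a + c)) := by
  intro b
  dsimp only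
  rw [add_right_comm b 1 c, hU (b + c)]
  congr! 4 with j
  omega

/-- The coefficient of `t ^ m` in `U (b + 1)` involves only coefficients of smaller
`weight (d + 1) m + b`. -/
theorem IsPowFamily.ext {U V : ℕ → MvPowerSeries σ R} (hU : IsPowFamily d U)
    (hV : IsPowFamily d V) (h0 : U 0 = V 0) : U = V := by
  suffices ∀ n a m, weight (d + 1) m + a ≤ n → coeff m (U a) = coeff m (V a) from
    funext fun a => MvPowerSeries.ext fun m => this _ a m le_rfl
  intro n
  induction n with
  | zero =>
    intro a m h
    obtain rfl : a = 0 := by omega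
    rw [h0]
  | succ n ih =>
    rintro (_ | b) m h
    · rw [h0]
    rw [hU, hV, map_add, map_add, map_sum, map_sum, ih b m (by omega)]
    congr 1
    refine Finset.sum_congr rfl fun j _ => ?_
    rw [coeff_X_mul, coeff_X_mul]
    split_ifs with hj
    · rfl
    · have := weight_sub_single_add (w := d + 1) hj
      exact ih _ _ (by simp only [Pi.add_apply, Pi.one_apply] at this; omega)

end Recursion

section Coefficients

variable {σ : Type*} [Fintype σ]

theorem mul_prod_factorial_sub_single {m : σ →₀ ℕ} {j : σ} (hj : m j ≠ 0) :
    m j * ∏ k, ((m - single j 1 : σ →₀ ℕ) k)! = ∏ k, (m k)! := by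
  classical
  rw [← Finset.mul_prod_erase _ _ (Finset.mem_univ j),
    ← Finset.mul_prod_erase _ (fun k => (m k)!) (Finset.mem_univ j), ← mul_assoc]
  congr 1
  · simp only [tsub_apply, single_eq_same, mul_factorial_pred hj]
  · refine Finset.prod_congr rfl fun k hk => ?_
    rw [tsub_apply, single_eq_of_ne (Finset.ne_of_mem_erase hk), tsub_zero]

theorem weight_add_one (d : σ → ℕ) (m : σ →₀ ℕ) : weight (d + 1) m = weight d m + degree m := by
  simp only [weight_eq_sum, degree_eq_sum, Pi.add_apply, Pi.one_apply, smul_eq_mul, mul_add,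
    mul_one, Finset.sum_add_distrib]

theorem sum_add_mul_eq_mul_degree_add_weight (d : σ → ℕ) (b : ℕ) (m : σ →₀ ℕ) :
    ∑ j, (b + d j + 1) * m j = b * degree m + weight (d + 1) m := by
  simp only [weight_eq_sum, degree_eq_sum, Finset.mul_sum, ← Finset.sum_add_distrib, smul_eq_mul,
    Pi.add_apply, Pi.one_apply]
  exact Finset.sum_congr rfl fun j _ => by ring

variable (d : σ → ℕ)

/-- The Lagrange-inversion formula for `S ^ a`, where `S = 1 + ∑ j, X j * S ^ (d j + 1)`. -/
noncomputable def powSeries : ℕ → MvPowerSeries σ ℚ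
  | 0 => 1
  | b + 1 => fun m => (b + 1) * (weight (d + 1) m + b)! /
      ((weight d m + b + 1)! * ∏ k, ((m k)! : ℚ))

variable {d}

theorem powSeries_zero : powSeries d 0 = 1 := rfl

theorem coeff_powSeries_succ (b : ℕ) (m : σ →₀ ℕ) :
    coeff m (powSeries d (b + 1)) = (b + 1) * (weight (d + 1) m + b)! /
      ((weight d m + b + 1)! * ∏ k, ((m k)! : ℚ)) := rfl

theorem coeff_zero_powSeries (a : ℕ) : coeff 0 (powSeries d a) = 1 := by
  rcases a with _ | b
  · exact coeff_zero_one
  · rw [coeff_powSeries_succ]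
    simp only [map_zero, zero_add, coe_zero, Pi.zero_apply, factorial_zero, cast_one,
      Finset.prod_const_one, mul_one, factorial_succ, cast_mul]
    have := factorial_ne_zero b
    field_simp
    push_cast
    ring

theorem coeff_sub_single_powSeries {m : σ →₀ ℕ} {j : σ} (hj : m j ≠ 0) (b : ℕ) :
    coeff (m - single j 1) (powSeries d (b + d j + 1)) = (b + d j + 1) * m j *
      (weight (d + 1) m - 1 + b)! / ((weight d m + b + 1)! * ∏ k, ((m k)! : ℚ)) := by
  have hE := weight_sub_single_add (w := d + 1) hj
  have hF := weight_sub_single_add (w := d) hj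
  simp only [Pi.add_apply, Pi.one_apply] at hE
  have hP : (m j : ℚ) * ∏ k, (((m - single j 1 : σ →₀ ℕ) k)! : ℚ) = ∏ k, ((m k)! : ℚ) := by
    exact_mod_cast mul_prod_factorial_sub_single hj
  rw [coeff_powSeries_succ, ← hP,
    show weight (d + 1) (m - single j 1) + (b + d j) = weight (d + 1) m - 1 + b by omega,
    show weight d (m - single j 1) + (b + d j) + 1 = weight d m + b + 1 by omega]
  have : (m j : ℚ) ≠ 0 := cast_ne_zero.mpr hj
  field_simp
  push_cast
  ring

theorem coeff_powSeries_succ_of_ne_zero {m : σ →₀ ℕ} (hm : m ≠ 0) (b : ℕ) :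
    coeff m (powSeries d (b + 1)) = coeff m (powSeries d b) +
      ∑ j, if m j = 0 then 0 else coeff (m - single j 1) (powSeries d (b + d j + 1)) := by
  obtain ⟨e, he⟩ : ∃ e, weight (d + 1) m = e + 1 := by
    obtain ⟨j, hj⟩ := Finsupp.ne_iff.mp hm
    have := le_weight_of_ne_zero' (d + 1) hj
    exact ⟨_, (Nat.sub_add_cancel (le_trans (by simp) this)).symm⟩
  have hEFN : (e : ℚ) + 1 = weight d m + degree m := by
    exact_mod_cast he.symm.trans (weight_add_one d m)
  have hterm (j : σ) : (if m j = 0 then 0 else coeff (m - single j 1) (powSeries d (b + d j + 1)))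
      = (b + d j + 1) * m j * ((e + b)! / ((weight d m + b + 1)! * ∏ k, ((m k)! : ℚ))) := by
    split_ifs with hj
    · simp [hj]
    · rw [coeff_sub_single_powSeries hj, he, Nat.add_sub_cancel, mul_div_assoc]
  have hsum : ∑ j, ((b : ℚ) + d j + 1) * m j = b * degree m + (e + 1) := by
    exact_mod_cast he ▸ sum_add_mul_eq_mul_degree_add_weight d b m
  have hP : ∏ k, ((m k)! : ℚ) ≠ 0 := Finset.prod_ne_zero_iff.mpr fun k _ => by positivity
  rw [Finset.sum_congr rfl fun j _ => hterm j, ← Finset.sum_mul, hsum, coeff_powSeries_succ, he]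
  rcases b with _ | b
  · classical
    rw [powSeries, coeff_one, if_neg hm]
    simp only [add_zero, factorial_succ, cast_mul, cast_zero, zero_mul, zero_add]
    push_cast
    field_simp
  · rw [coeff_powSeries_succ, he, show e + 1 + (b + 1) = e + b + 1 + 1 by omega,
      show e + 1 + b = e + b + 1 by omega, show e + (b + 1) = e + b + 1 by omega,
      show weight d m + (b + 1) + 1 = weight d m + b + 1 + 1 by omega,
      factorial_succ (e + b + 1), factorial_succ (weight d m + b + 1)]
    push_cast
    field_simp
    linear_combination ((b : ℚ) + 1) * hEFN

theorem isPowFamily_powSeries : IsPowFamily d (powSeries d) := by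
  intro b
  ext m
  simp only [map_add, map_sum, coeff_X_mul]
  by_cases hm : m = 0
  · simp [hm, coeff_zero_powSeries]
  · exact coeff_powSeries_succ_of_ne_zero hm b

theorem powSeries_add (a c : ℕ) : powSeries d (a + c) = powSeries d a * powSeries d c :=
  congrFun ((isPowFamily_powSeries.comp_add_right c).ext (isPowFamily_powSeries.mul_right _)
    (by rw [zero_add, powSeries_zero, one_mul])) a

theorem powSeries_one_pow (n : ℕ) : powSeries d 1 ^ n = powSeries d n := by
  induction n with
  | zero => rfl
  | succ n ih => rw [pow_succ, ih, powSeries_add]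

theorem powSeries_one_eq : powSeries d 1 = 1 + ∑ j, X j * powSeries d 1 ^ (d j + 1) := by
  simpa only [powSeries_one_pow, powSeries_zero, zero_add] using isPowFamily_powSeries 0

end Coefficients

end HyperCatalan

open HyperCatalan MvPowerSeries Finsupp Nat in
theorem hyperCatalanSeries_eq_powSeries (q : ℕ) :
    hyperCatalanSeries q = powSeries (fun k : TIdx q => (k : ℕ) - 1) 1 := by
  ext m
  have hd : ((fun k : TIdx q => (k : ℕ) - 1) + 1 : TIdx q → ℕ) = fun k : TIdx q => (k : ℕ) :=
    funext fun k => Nat.sub_add_cancel (Nat.one_le_of_lt (Finset.mem_Icc.mp k.2).1)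
  have hP : ∏ k ∈ m.support, ((m k)! : ℚ) = ∏ k, ((m k)! : ℚ) :=
    Finset.prod_subset (Finset.subset_univ _) fun k _ hk => by
      rw [Finsupp.notMem_support_iff.mp hk, factorial_zero, cast_one]
  rw [coeff_powSeries_succ, hd]
  simp only [weight_apply, smul_eq_mul, mul_comm _ ((_ : TIdx q) : ℕ), mul_comm _ ((_ : ℕ) - 1)]
  show hyperCatalan q m = _
  rw [hyperCatalan, hP, add_comm 1, cast_zero, zero_add, one_mul, add_zero, add_zero]

/-- The hyper-Catalan series satisfies the recursion on coefficients encoded by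
`S = 1 + Σ_{k=2}^q t_k S^k` (in particular `C[0] = 1`, and for `m ≠ 0`, `C[m]` is
a sum over decompositions of `m` minus one `k`-gon into `k` types). -/
theorem stmt_11 (q : ℕ) :
    hyperCatalanSeries q =
      1 + ∑ k : TIdx q, MvPowerSeries.X k * hyperCatalanSeries q ^ (k : ℕ) := by
  rw [hyperCatalanSeries_eq_powSeries]
  conv_lhs => rw [HyperCatalan.powSeries_one_eq]
  refine congrArg (1 + ·) (Finset.sum_congr rfl fun k _ => ?_)
  rw [Nat.sub_add_cancel (Nat.one_le_of_lt (Finset.mem_Icc.mp k.2).1)]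
end

section
/- If S ∈ ℚ[[t₃]] satisfies 1 − S + t₃ S³ = 0, then the coefficient of t₃ⁿ in S is the Fuss–Catalan number (3n)!/((2n+1)! n!). -/
/-!
Applying the Euler operator `θ = X d/dX` twice to `1 - S + X S³ = 0` and eliminating yields, after
cancelling the factor `1 - 3 X S²` (a unit, with constant coefficient `1`), the linear equation
`2θ(2θ + 1) S = 3X(3θ + 1)(3θ + 2) S`. Comparing coefficients of `X^(k+1)` gives
`2(k+1)(2k+3) a_{k+1} = 3(3k+1)(3k+2) a_k`, the recurrence of the Fuss–Catalan numbers, and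
`a_0 = 1`.
-/

namespace PowerSeries

variable {R : Type*}

section CommSemiring

variable [CommSemiring R]

variable (R) in
noncomputable def eulerDerivation : Derivation R R⟦X⟧ R⟦X⟧ := (X : R⟦X⟧) • d⁄dX R

theorem eulerDerivation_apply (f : R⟦X⟧) : eulerDerivation R f = X * d⁄dX R f := rfl

@[simp] theorem eulerDerivation_X : eulerDerivation R (X : R⟦X⟧) = X := by
  simp [eulerDerivation_apply]

@[simp] theorem coeff_eulerDerivation (f : R⟦X⟧) (n : ℕ) :
    coeff n (eulerDerivation R f) = n * coeff n f := by
  rcases n with _ | n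
  · simp [eulerDerivation_apply]
  · rw [eulerDerivation_apply, coeff_succ_X_mul, coeff_derivative, mul_comm]
    push_cast
    rfl

@[simp] theorem coeff_ofNat_mul (m : ℕ) [m.AtLeastTwo] (f : R⟦X⟧) (n : ℕ) :
    coeff n (ofNat(m) * f) = ofNat(m) * coeff n f := by
  rw [← map_ofNat C, coeff_C_mul]

end CommSemiring

section Cubic

variable [CommRing R] {S : R⟦X⟧}

theorem constantCoeff_eq_one_of_cubic_eq (h : 1 - S + X * S ^ 3 = 0) :
    constantCoeff S = 1 := by
  have h0 := congrArg constantCoeff h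
  simp only [map_add, map_sub, map_one, map_mul, constantCoeff_X, zero_mul, map_zero] at h0
  linear_combination -h0

theorem eulerDerivation_ode_of_cubic_eq [IsDomain R] (h : 1 - S + X * S ^ 3 = 0) :
    4 * eulerDerivation R (eulerDerivation R S) + 2 * eulerDerivation R S =
      3 * X * (9 * eulerDerivation R (eulerDerivation R S) + 9 * eulerDerivation R S + 2 * S) := by
  set T₁ := eulerDerivation R S
  set T₂ := eulerDerivation R T₁
  have h₁ := congrArg (eulerDerivation R) h
  have h₂ := congrArg (eulerDerivation R) h₁
  simp only [map_add, map_sub, map_zero, Derivation.map_one_eq_zero, Derivation.leibniz,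
    Derivation.leibniz_pow, Derivation.map_natCast, eulerDerivation_X, smul_eq_mul,
    nsmul_eq_mul] at h₁ h₂
  have hu : (1 - 3 * X * S ^ 2) * (4 * T₂ + 2 * T₁ - 3 * X * (9 * T₂ + 9 * T₁ + 2 * S)) = 0 := by
    linear_combination
      (-6*X*S - 6*X*S^2 - 36*X*T₁ - 30*X*S*T₁ - 36*X*T₁^2 - 54*X^2*S^2*T₁ - 162*X^2*S*T₁^2) * h
      + (-2 - 9*X + 6*X*S + 6*X*S^2 - 36*X*T₁ + 12*X*S*T₁ + 54*X^2*S^2*T₁) * h₁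
      + (-4 + 27*X) * h₂
  have hu0 : (1 - 3 * X * S ^ 2 : R⟦X⟧) ≠ 0 := fun h0 => by
    simpa using congrArg constantCoeff h0
  exact sub_eq_zero.mp ((mul_eq_zero.mp hu).resolve_left hu0)

theorem coeff_succ_recurrence_of_cubic_eq [IsDomain R] (h : 1 - S + X * S ^ 3 = 0) (k : ℕ) :
    (2 * (k + 1) * (2 * k + 3) : R) * coeff (k + 1) S =
      3 * (3 * k + 1) * (3 * k + 2) * coeff k S := by
  have hk := congrArg (coeff (k + 1)) (eulerDerivation_ode_of_cubic_eq h)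
  rw [mul_assoc 3, mul_left_comm, coeff_succ_X_mul] at hk
  simp only [map_add, coeff_ofNat_mul, coeff_eulerDerivation] at hk
  push_cast at hk
  linear_combination hk

end Cubic

end PowerSeries

open PowerSeries

open Nat in
def fussCatalan (n : ℕ) : ℚ := (3 * n)! / ((2 * n + 1)! * n !)

open Nat in
theorem fussCatalan_succ (n : ℕ) :
    (2 * (n + 1) * (2 * n + 3) : ℚ) * fussCatalan (n + 1) =
      3 * (3 * n + 1) * (3 * n + 2) * fussCatalan n := by
  have h3 : 3 * (n + 1) = 3 * n + 2 + 1 := by ring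
  have h2 : 2 * (n + 1) + 1 = 2 * n + 1 + 1 + 1 := by ring
  simp only [fussCatalan, h3, h2, factorial_succ]
  push_cast
  field_simp
  ring

/-- If `S ∈ ℚ[[t]]` satisfies `1 − S + t·S³ = 0`, then the `n`-th coefficient of `S`
is the Fuss–Catalan number `(3n)! / ((2n+1)!·n!)`. -/
theorem stmt_16 (S : PowerSeries ℚ) (h : 1 - S + PowerSeries.X * S ^ 3 = 0) (n : ℕ) :
    PowerSeries.coeff n S =
      (Nat.factorial (3 * n) : ℚ) /
        ((Nat.factorial (2 * n + 1) : ℚ) * (Nat.factorial n : ℚ)) := by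
  change coeff n S = fussCatalan n
  induction n with
  | zero => simpa [fussCatalan] using constantCoeff_eq_one_of_cubic_eq h
  | succ n ih =>
    refine mul_left_cancel₀ (by positivity : (2 * (n + 1) * (2 * n + 3) : ℚ) ≠ 0) ?_
    rw [fussCatalan_succ, coeff_succ_recurrence_of_cubic_eq h, ih]
end

section
/- The layered series S_L = Σ_m C[m] t^m v^{V_m − 2} e^{E_m − 1} f^{F_m}, reduced modulo f^{d+1}, satisfies the layered geometric equation modulo f^{d+1}: 1 − S_L' + Σ_{k=2}^q v^{k−1} e^k f t_k (S_L')^k ≡ 0 (mod f^{d+1}), where S_L' = S_L mod f^{d+1}. -/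
/-- Variables of the layered ring: `t_2, …, t_q` together with `v, e, f`
(encoded as `Sum.inr 0`, `Sum.inr 1`, `Sum.inr 2`). -/
abbrev LIdx (q : ℕ) := TIdx q ⊕ Fin 3

/-- The `t`-part of a layered exponent vector. -/
noncomputable def tPart (q : ℕ) (n : LIdx q →₀ ℕ) : TIdx q →₀ ℕ :=
  Finsupp.comapDomain Sum.inl n Sum.inl_injective.injOn

/-- The layered series `S_L = Σ_m C[m] t^m v^{V_m−2} e^{E_m−1} f^{F_m}`: the
coefficient of a layered monomial is `C[m]` for its `t`-part `m`, provided the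
`v`, `e`, `f` exponents are `V_m − 2 = Σ(k−1)m_k`, `E_m − 1 = Σ k·m_k`, `F_m = Σ m_k`. -/
noncomputable def layeredSeries (q : ℕ) : MvPowerSeries (LIdx q) ℚ :=
  fun n =>
    if n (Sum.inr 0) = (tPart q n).sum (fun k mk => ((k : ℕ) - 1) * mk) ∧
        n (Sum.inr 1) = (tPart q n).sum (fun k mk => (k : ℕ) * mk) ∧
        n (Sum.inr 2) = (tPart q n).sum (fun _ mk => mk) then
      hyperCatalan q (tPart q n)
    else 0

/-- Reduction modulo `f^{d+1}`: discard all monomials with `f`-degree `> d`. -/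
noncomputable def truncF (q d : ℕ) (φ : MvPowerSeries (LIdx q) ℚ) :
    MvPowerSeries (LIdx q) ℚ :=
  fun n => if n (Sum.inr 2) ≤ d then MvPowerSeries.coeff n φ else 0

/-!
Layering is the monomial substitution `t_k ↦ t_k v^{k-1} e^k f`: it sends `t^m` to
`t^m v^{V_m-2} e^{E_m-1} f^{F_m}`, and `m` can be read off the `t`-part of the image, so the map on
exponents is injective and `S_L` is exactly the image of `S`. Substitution is a ring homomorphism,
hence carries `1 - S + Σ t_k S^k = 0` to the layered equation for `S_L`. Reduction mod `f^{d+1}`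
is reduction modulo the ideal `(f^{d+1})`, which commutes with the ring operations, and
`S_L' ≡ S_L` modulo that ideal.
-/

open MvPowerSeries Finsupp

namespace MvPowerSeries

variable {σ τ R : Type*} [CommRing R] {ℓ : σ → τ →₀ ℕ}

theorem hasSubst_monomial_of_injective (hℓ : Function.Injective (linearCombination ℕ ℓ)) :
    HasSubst (fun s ↦ (monomial (ℓ s) 1 : MvPowerSeries τ R)) := by
  classical
  have hℓs (s : σ) : linearCombination ℕ ℓ (single s 1) = ℓ s := by simp
  refine ⟨fun s ↦ ?_, fun e ↦ ?_⟩
  · have hne : (0 : τ →₀ ℕ) ≠ ℓ s := by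
      rw [← hℓs, ← map_zero (linearCombination ℕ ℓ)]
      exact hℓ.ne (single_ne_zero.mpr one_ne_zero).symm
    rw [← coeff_zero_eq_constantCoeff_apply, coeff_monomial_ne hne]
    exact IsNilpotent.zero
  · refine Set.Subsingleton.finite fun s hs t ht ↦ ?_
    have hse : ℓ s = e := by_contra fun h ↦ hs (coeff_monomial_ne (Ne.symm h) 1)
    have hte : ℓ t = e := by_contra fun h ↦ ht (coeff_monomial_ne (Ne.symm h) 1)
    exact (single_left_inj one_ne_zero).mp (hℓ (by rw [hℓs, hℓs, hse, hte]))

theorem prod_monomial_pow (d : σ →₀ ℕ) :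
    (d.prod fun s e ↦ (monomial (ℓ s) 1 : MvPowerSeries τ R) ^ e) =
      monomial (linearCombination ℕ ℓ d) 1 := by
  simp only [monomial_pow, one_pow, Finsupp.prod, prod_monomial, Finset.prod_const_one,
    linearCombination_apply, Finsupp.sum]

theorem coeff_linearCombination_subst_monomial
    (hℓ : Function.Injective (linearCombination ℕ ℓ)) (f : MvPowerSeries σ R) (d : σ →₀ ℕ) :
    coeff (linearCombination ℕ ℓ d) (subst (fun s ↦ (monomial (ℓ s) 1 : MvPowerSeries τ R)) f) =
      coeff d f := by
  rw [coeff_subst (hasSubst_monomial_of_injective hℓ), finsum_eq_single _ d]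
  · rw [prod_monomial_pow, coeff_monomial_same, smul_eq_mul, mul_one]
  · intro d' hd'
    rw [prod_monomial_pow, coeff_monomial_ne (hℓ.ne hd').symm, smul_zero]

theorem coeff_subst_monomial_of_notMem_range
    (hℓ : Function.Injective (linearCombination ℕ ℓ)) (f : MvPowerSeries σ R) {e : τ →₀ ℕ}
    (he : e ∉ Set.range (linearCombination ℕ ℓ)) :
    coeff e (subst (fun s ↦ (monomial (ℓ s) 1 : MvPowerSeries τ R)) f) = 0 := by
  rw [coeff_subst (hasSubst_monomial_of_injective hℓ)]
  refine finsum_eq_zero_of_forall_eq_zero fun d ↦ ?_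
  rw [prod_monomial_pow, coeff_monomial_ne (fun h ↦ he ⟨d, h.symm⟩), smul_zero]

end MvPowerSeries

noncomputable def layerExponent (q : ℕ) (k : TIdx q) : LIdx q →₀ ℕ :=
  single (Sum.inl k) 1 + single (Sum.inr 0) ((k : ℕ) - 1) + single (Sum.inr 1) (k : ℕ) +
    single (Sum.inr 2) 1

variable {q : ℕ}

theorem monomial_layerExponent (k : TIdx q) :
    (monomial (layerExponent q k) 1 : MvPowerSeries (LIdx q) ℚ) =
      X (Sum.inl k) * X (Sum.inr 0) ^ ((k : ℕ) - 1) * X (Sum.inr 1) ^ (k : ℕ) * X (Sum.inr 2) := by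
  rw [X_pow_eq, X_pow_eq]
  simp only [layerExponent, X, monomial_mul_monomial, mul_one]

theorem linearCombination_layerExponent_apply (m : TIdx q →₀ ℕ) (x : LIdx q) :
    linearCombination ℕ (layerExponent q) m x = m.sum fun k mk ↦ mk * layerExponent q k x := by
  rw [linearCombination_apply, Finsupp.sum_apply]
  rfl

theorem linearCombination_layerExponent_apply_inl (m : TIdx q →₀ ℕ) (k : TIdx q) :
    linearCombination ℕ (layerExponent q) m (Sum.inl k) = m k := by
  classical
  simp [linearCombination_layerExponent_apply, layerExponent, single_apply, eq_comm]

theorem tPart_linearCombination_layerExponent (m : TIdx q →₀ ℕ) :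
    tPart q (linearCombination ℕ (layerExponent q) m) = m :=
  Finsupp.ext (linearCombination_layerExponent_apply_inl m)

theorem linearCombination_layerExponent_injective :
    Function.Injective (linearCombination ℕ (layerExponent q)) :=
  Function.LeftInverse.injective tPart_linearCombination_layerExponent

theorem eq_linearCombination_layerExponent_tPart_iff (n : LIdx q →₀ ℕ) :
    n = linearCombination ℕ (layerExponent q) (tPart q n) ↔
      n (Sum.inr 0) = (tPart q n).sum (fun k mk => ((k : ℕ) - 1) * mk) ∧
        n (Sum.inr 1) = (tPart q n).sum (fun k mk => (k : ℕ) * mk) ∧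
        n (Sum.inr 2) = (tPart q n).sum (fun _ mk => mk) := by
  classical
  rw [Finsupp.ext_iff, Sum.forall, Fin.forall_fin_succ, Fin.forall_fin_two]
  simp only [linearCombination_layerExponent_apply_inl]
  simp [tPart, linearCombination_layerExponent_apply, layerExponent, mul_comm]

theorem layeredSeries_eq_subst :
    layeredSeries q =
      subst (fun k ↦ monomial (layerExponent q k) 1) (hyperCatalanSeries q) := by
  ext n
  change (if _ then _ else _) = _
  split_ifs with h
  · conv_rhs => rw [(eq_linearCombination_layerExponent_tPart_iff n).mpr h]
    rw [coeff_linearCombination_subst_monomial linearCombination_layerExponent_injective]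
    rfl
  · refine (coeff_subst_monomial_of_notMem_range
      linearCombination_layerExponent_injective _ ?_).symm
    rintro ⟨m, rfl⟩
    rw [← eq_linearCombination_layerExponent_tPart_iff,
      tPart_linearCombination_layerExponent] at h
    exact h rfl

theorem layeredSeries_geometric
    (hS : 1 - hyperCatalanSeries q + ∑ k : TIdx q,
        X k * hyperCatalanSeries q ^ (k : ℕ) = 0) :
    1 - layeredSeries q + ∑ k : TIdx q,
        (X (Sum.inl k) : MvPowerSeries (LIdx q) ℚ) * X (Sum.inr 0) ^ ((k : ℕ) - 1) *
          X (Sum.inr 1) ^ (k : ℕ) * X (Sum.inr 2) * layeredSeries q ^ (k : ℕ) = 0 := by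
  have ha := hasSubst_monomial_of_injective (R := ℚ)
    (linearCombination_layerExponent_injective (q := q))
  have := congrArg (substAlgHom ha) hS
  simp only [map_add, map_sub, map_one, map_sum, map_mul, map_pow, map_zero] at this
  rw [substAlgHom_apply, ← layeredSeries_eq_subst] at this
  simpa only [substAlgHom_X, monomial_layerExponent] using this

theorem X_pow_dvd_truncF_sub (d : ℕ) (φ : MvPowerSeries (LIdx q) ℚ) :
    X (Sum.inr 2) ^ (d + 1) ∣ truncF q d φ - φ := by
  refine X_pow_dvd_iff.mpr fun m hm ↦ ?_
  rw [map_sub]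
  change (if m (Sum.inr 2) ≤ d then _ else 0) - _ = 0
  rw [if_pos (Nat.lt_succ_iff.mp hm), sub_self]

/-- The layered series reduced mod `f^{d+1}` satisfies the layered geometric
equation mod `f^{d+1}`: assuming the unlayered identity `1 − S + Σ t_k S^k = 0`
for `S = Σ C[m] t^m`, every coefficient of `f`-degree `≤ d` of
`1 − S_L' + Σ_k v^{k−1} e^k f t_k (S_L')^k` vanishes, where `S_L' = S_L mod f^{d+1}`. -/
theorem stmt_18 (q d : ℕ)
    (hS : 1 - hyperCatalanSeries q + ∑ k : TIdx q,
        MvPowerSeries.X k * hyperCatalanSeries q ^ (k : ℕ) = 0) :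
    ∀ n : LIdx q →₀ ℕ, n (Sum.inr 2) ≤ d →
      MvPowerSeries.coeff n
        (1 - truncF q d (layeredSeries q) + ∑ k : TIdx q,
          (MvPowerSeries.X (Sum.inl k) : MvPowerSeries (LIdx q) ℚ) *
            MvPowerSeries.X (Sum.inr 0) ^ ((k : ℕ) - 1) *
            MvPowerSeries.X (Sum.inr 1) ^ (k : ℕ) *
            MvPowerSeries.X (Sum.inr 2) *
            truncF q d (layeredSeries q) ^ (k : ℕ)) = 0 := by
  intro n hn
  refine X_pow_dvd_iff.mp ?_ n (Nat.lt_succ_of_le hn)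
  let I := Ideal.span {(X (Sum.inr 2) : MvPowerSeries (LIdx q) ℚ) ^ (d + 1)}
  have htrunc : Ideal.Quotient.mk I (truncF q d (layeredSeries q)) =
      Ideal.Quotient.mk I (layeredSeries q) :=
    Ideal.Quotient.eq.mpr (Ideal.mem_span_singleton.mpr (X_pow_dvd_truncF_sub d _))
  have h0 := congrArg (Ideal.Quotient.mk I) (layeredSeries_geometric hS)
  rw [← Ideal.mem_span_singleton, ← Ideal.Quotient.eq_zero_iff_mem]
  simp only [map_add, map_sub, map_one, map_sum, map_mul, map_pow, map_zero] at h0 ⊢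
  rwa [htrunc]
end
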